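/- Let m be a positive integer and z a complex number with S_{m−1}(z) = 0 (where S denotes Chebyshev polynomials of the second kind). Let A = [[1,1],[0,1]], B = [[1,0],[2−z,1]]. Then (A⁻¹B)^m(AB⁻¹)^m = I, the identity matrix. -/

import Mathlib

/-! Q = A⁻¹B has trace z and determinant 1, so Q² = zQ − 1 and inductively
Q^(n+2) = S_{n+1}(z) Q − S_n(z); thus S_{m−1}(z) = 0 makes Q^m a scalar matrix.
Since AB⁻¹ = A Q⁻¹ A⁻¹, we get (AB⁻¹)^m = A Q^(−m) A⁻¹, and a scalar Q^m commutes
with A, so Q^m (AB⁻¹)^m = 1. -/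

noncomputable def S : ℕ → ℂ → ℂ
  | 0 => fun _ => 1
  | 1 => fun q => q
  | (n + 2) => fun q => q * S (n + 1) q - S n q

lemma S_add_two (n : ℕ) (q : ℂ) : S (n + 2) q = q * S (n + 1) q - S n q := rfl

section Chebyshev

variable {R : Type*} [Ring R] [Algebra ℂ R] {M : R} {z : ℂ}

lemma pow_add_two_eq_of_mul_self_eq (h : M * M = z • M - 1) (n : ℕ) :
    M ^ (n + 2) = S (n + 1) z • M - S n z • 1 := by
  induction n with
  | zero => simp [sq, h, S]
  | succ n ih =>
    rw [pow_succ, ih, sub_mul, smul_mul_assoc, h, smul_one_mul, S_add_two]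
    simp only [smul_sub, smul_smul, sub_smul, mul_comm z]
    abel

lemma exists_pow_eq_smul_one_of_S_eq_zero (h : M * M = z • M - 1) {m : ℕ}
    (hS : S (m - 1) z = 0) : ∃ c : ℂ, M ^ m = c • 1 := by
  match m, hS with
  | 0, _ => exact ⟨1, by simp⟩
  | 1, hS => simp [S] at hS
  | n + 2, hS =>
    refine ⟨-S n z, ?_⟩
    rw [pow_add_two_eq_of_mul_self_eq h, show S (n + 1) z = 0 from hS, zero_smul, zero_sub,
      neg_smul]

end Chebyshev

lemma Matrix.mul_self_eq_trace_smul_sub_det_smul {R : Type*} [CommRing R]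
    (M : Matrix (Fin 2) (Fin 2) R) : M * M = M.trace • M - M.det • 1 := by
  ext i j
  fin_cases i <;> fin_cases j <;>
    simp [Matrix.mul_apply, Matrix.trace_fin_two, Matrix.det_fin_two] <;> ring

lemma inv_mul_pow_mul_mul_inv_pow_eq_one {G : Type*} [Group G] {a b : G} {m : ℕ}
    (h : Commute a ((a⁻¹ * b) ^ m)) : (a⁻¹ * b) ^ m * (a * b⁻¹) ^ m = 1 := by
  have hconj : a * b⁻¹ = a * (a⁻¹ * b)⁻¹ * a⁻¹ := by group
  rw [hconj, conj_pow, ← mul_assoc, ← mul_assoc, ← h.eq, mul_assoc a, inv_pow,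
    mul_inv_cancel, mul_one, mul_inv_cancel]

theorem stmt_18_general (m : ℕ) (z : ℂ) (hz : S (m - 1) z = 0)
    (A B : Matrix (Fin 2) (Fin 2) ℂ)
    (hA : A = !![1, 1; 0, 1]) (hB : B = !![1, 0; 2 - z, 1]) :
    (A⁻¹ * B) ^ m * (A * B⁻¹) ^ m = 1 := by
  have hdetA : A.det = 1 := by simp [hA, Matrix.det_fin_two_of]
  have hdetB : B.det = 1 := by simp [hB, Matrix.det_fin_two_of]
  have hAinv : A⁻¹ = !![1, -1; 0, 1] := Matrix.inv_eq_left_inv (by simp [hA, Matrix.one_fin_two])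
  have htrace : (A⁻¹ * B).trace = z := by
    rw [hAinv, hB, Matrix.mul_fin_two, Matrix.trace_fin_two_of]
    ring
  have hdet : (A⁻¹ * B).det = 1 := by simp [Matrix.det_nonsing_inv, hdetA, hdetB]
  obtain ⟨c, hc⟩ := exists_pow_eq_smul_one_of_S_eq_zero
    (by simpa [htrace, hdet] using (A⁻¹ * B).mul_self_eq_trace_smul_sub_det_smul) hz
  obtain ⟨a, rfl⟩ : IsUnit A := (Matrix.isUnit_iff_isUnit_det A).mpr (hdetA ▸ isUnit_one)
  obtain ⟨b, rfl⟩ : IsUnit B := (Matrix.isUnit_iff_isUnit_det B).mpr (hdetB ▸ isUnit_one)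
  have hcomm : Commute a ((a⁻¹ * b) ^ m) := Units.ext <| by
    push_cast [Matrix.coe_units_inv]
    rw [hc]
    exact (Commute.one_right _).smul_right c
  simpa [Matrix.coe_units_inv] using congrArg Units.val (inv_mul_pow_mul_mul_inv_pow_eq_one hcomm)

theorem stmt_18 (m : ℕ) (hm : 0 < m) (z : ℂ) (hz : S (m - 1) z = 0)
    (A B : Matrix (Fin 2) (Fin 2) ℂ)
    (hA : A = !![1, 1; 0, 1]) (hB : B = !![1, 0; 2 - z, 1]) :
    (A⁻¹ * B) ^ m * (A * B⁻¹) ^ m = 1 :=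
  stmt_18_general m z hz A B hA hB
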